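/- arXiv:0707.1660 — 2 statements merged into one kernel-verified Lean document; each statement's English description precedes it below -/
import Mathlib

section
/- For all complex numbers x, y and every nonnegative integer n, (x + y)·p_{2n+1,μ}(x,y) = p_{2n+2,μ}(x,y) + (2μ/(n+1))·Σ_{k=0}^{n} C_μ(2n+2, 2k+1) x^{2k+1} y^{2n+1-2k}. -/
/-!
Writing `[n]_μ = n + 2μθ(n)` for the factors of `γ_μ`, the μ-binomials satisfy the Pascal rule
`[m+1]_μ (C_μ(m,j-1) + C_μ(m,j)) = ([j]_μ + [m+1-j]_μ) C_μ(m+1,j)`, and multiplying `p_{m,μ}`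
by `x + y` produces exactly the coefficients `C_μ(m,j-1) + C_μ(m,j)`. For `m + 1 = 2n+2` even,
`[2n+2]_μ = 2n+2` and `j`, `2n+2-j` have the same parity, so the right-hand factor is
`2n+2 + 4μθ(j)`: the extra `4μ/(2n+2)` survives exactly at the odd `j`.
-/

open Finset

/-- The μ-deformed factorial function γ_μ. -/
noncomputable def gammaMu (μ : ℝ) : ℕ → ℝ
  | 0 => 1
  | n + 1 => ((n + 1 : ℝ) + 2 * μ * (if Odd (n + 1) then 1 else 0)) * gammaMu μ n

/-- The μ-deformed binomial coefficient C_μ(n,k), zero outside 0 ≤ k ≤ n. -/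
noncomputable def binomMu (μ : ℝ) (n : ℕ) (k : ℤ) : ℝ :=
  if 0 ≤ k ∧ k ≤ (n : ℤ) then gammaMu μ n / (gammaMu μ (n - k.toNat) * gammaMu μ k.toNat) else 0

/-- The n-th μ-deformed binomial polynomial p_{n,μ}(x,y). -/
noncomputable def pMu (μ : ℝ) (n : ℕ) (x y : ℂ) : ℂ :=
  ∑ k ∈ Finset.range (n + 1), (binomMu μ n k : ℂ) * x ^ k * y ^ (n - k)

/-- The μ-deformed exponential function. -/
noncomputable def expMu (μ : ℝ) (z : ℂ) : ℂ :=
  ∑' n : ℕ, z ^ n / (gammaMu μ n : ℂ)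

/-- The Bessel function of the first kind of order ν, for positive real argument. -/
noncomputable def besselJ (ν x : ℝ) : ℝ :=
  ∑' m : ℕ, ((-1) ^ m / (Nat.factorial m * Real.Gamma (ν + m + 1))) * (x / 2) ^ ((2 * m : ℝ) + ν)

/-- The `μ`-integer `[n]_μ = n + 2μθ(n)`, so that `γ_μ(n) = [1]_μ ⋯ [n]_μ`. -/
noncomputable def natMu (μ : ℝ) (n : ℕ) : ℝ :=
  n + 2 * μ * (if Odd n then 1 else 0)

lemma natMu_of_even (μ : ℝ) {n : ℕ} (hn : Even n) : natMu μ n = n := by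
  simp [natMu, Nat.not_odd_iff_even.mpr hn]

lemma natMu_pos (μ : ℝ) (hμ : -(1/2 : ℝ) < μ) {n : ℕ} (hn : 0 < n) : 0 < natMu μ n := by
  have hn' : (1 : ℝ) ≤ n := by exact_mod_cast hn
  by_cases hodd : Odd n
  · simp only [natMu, if_pos hodd]; linarith
  · simp only [natMu, if_neg hodd]; linarith

lemma natMu_add_natMu_sub (μ : ℝ) {N j : ℕ} (hN : Even N) (hj : j ≤ N) :
    natMu μ j + natMu μ (N - j) = N + 4 * μ * (if Odd j then 1 else 0) := by
  have hpar : Odd (N - j) ↔ Odd j := by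
    rw [Nat.odd_sub hj]; simp [Nat.not_odd_iff_even.mpr hN]
  have hcast : ((N - j : ℕ) : ℝ) = N - j := Nat.cast_sub hj
  by_cases hodd : Odd j
  · simp only [natMu, if_pos hodd, if_pos (hpar.mpr hodd), hcast]; ring
  · simp only [natMu, if_neg hodd, if_neg (fun h => hodd (hpar.mp h)), hcast]; ring

lemma gammaMu_succ (μ : ℝ) (n : ℕ) : gammaMu μ (n + 1) = natMu μ (n + 1) * gammaMu μ n := by
  simp [gammaMu, natMu]

lemma gammaMu_pos (μ : ℝ) (hμ : -(1/2 : ℝ) < μ) (n : ℕ) : 0 < gammaMu μ n := by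
  induction n with
  | zero => simp [gammaMu]
  | succ n ih => rw [gammaMu_succ]; exact mul_pos (natMu_pos μ hμ n.succ_pos) ih

lemma binomMu_add (μ : ℝ) (a b : ℕ) :
    binomMu μ (a + b) a = gammaMu μ (a + b) / (gammaMu μ b * gammaMu μ a) := by
  simp [binomMu]

lemma binomMu_of_neg (μ : ℝ) (n : ℕ) {k : ℤ} (hk : k < 0) : binomMu μ n k = 0 :=
  if_neg fun h => by omega

lemma binomMu_of_lt (μ : ℝ) {n : ℕ} {k : ℤ} (hk : n < k) : binomMu μ n k = 0 :=
  if_neg fun h => by omega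

lemma binomMu_zero (μ : ℝ) (hμ : -(1/2 : ℝ) < μ) (n : ℕ) : binomMu μ n 0 = 1 := by
  simpa [gammaMu, (gammaMu_pos μ hμ n).ne'] using binomMu_add μ 0 n

lemma binomMu_self (μ : ℝ) (hμ : -(1/2 : ℝ) < μ) (n : ℕ) : binomMu μ n n = 1 := by
  simpa [gammaMu, (gammaMu_pos μ hμ n).ne'] using binomMu_add μ n 0

lemma natMu_mul_binomMu_pascal (μ : ℝ) (hμ : -(1/2 : ℝ) < μ) (m j : ℕ) :
    natMu μ (m + 1) * (binomMu μ m (j - 1) + binomMu μ m j) =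
      (natMu μ j + natMu μ (m + 1 - j)) * binomMu μ (m + 1) j := by
  rcases j with _ | a
  · simp [binomMu_of_neg, binomMu_zero μ hμ, natMu]
  rcases lt_trichotomy a m with hlt | rfl | hgt
  · obtain ⟨b, rfl⟩ := Nat.exists_eq_add_of_lt hlt
    have hA := (gammaMu_pos μ hμ a).ne'
    have hB := (gammaMu_pos μ hμ b).ne'
    have hα := (natMu_pos μ hμ a.succ_pos).ne'
    have hβ := (natMu_pos μ hμ b.succ_pos).ne'
    have h₁ : binomMu μ (a + b + 1) ((a + 1 : ℕ) - 1 : ℤ) =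
        gammaMu μ (a + b + 1) / (gammaMu μ (b + 1) * gammaMu μ a) := by
      simpa [add_assoc] using binomMu_add μ a (b + 1)
    have h₂ : binomMu μ (a + b + 1) (a + 1 : ℕ) =
        gammaMu μ (a + b + 1) / (gammaMu μ b * gammaMu μ (a + 1)) := by
      simpa [add_right_comm] using binomMu_add μ (a + 1) b
    have h₃ : binomMu μ (a + b + 1 + 1) (a + 1 : ℕ) =
        gammaMu μ (a + b + 1 + 1) / (gammaMu μ (b + 1) * gammaMu μ (a + 1)) := by
      simpa [add_assoc, add_left_comm] using binomMu_add μ (a + 1) (b + 1)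
    have hsub : a + b + 1 + 1 - (a + 1) = b + 1 := by omega
    rw [h₁, h₂, h₃, hsub, gammaMu_succ μ (a + b + 1), gammaMu_succ μ a, gammaMu_succ μ b]
    field_simp
  · rw [binomMu_of_lt μ (show ((a : ℕ) : ℤ) < (a + 1 : ℕ) by omega), Nat.cast_add_one,
      add_sub_cancel_right, ← Nat.cast_add_one, binomMu_self μ hμ, binomMu_self μ hμ]
    simp [natMu]
  · rw [binomMu_of_lt μ (show (m : ℤ) < (a + 1 : ℕ) - 1 by omega),
      binomMu_of_lt μ (show (m : ℤ) < (a + 1 : ℕ) by omega),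
      binomMu_of_lt μ (show ((m + 1 : ℕ) : ℤ) < (a + 1 : ℕ) by omega)]
    simp

lemma binomMu_pascal_even (μ : ℝ) (hμ : -(1/2 : ℝ) < μ) (n : ℕ) {j : ℕ} (hj : j ≤ 2 * n + 2) :
    binomMu μ (2 * n + 1) (j - 1) + binomMu μ (2 * n + 1) j =
      (1 + 2 * μ / (n + 1) * (if Odd j then 1 else 0)) * binomMu μ (2 * n + 2) j := by
  have hpascal := natMu_mul_binomMu_pascal μ hμ (2 * n + 1) j
  have heven : Even (2 * n + 2) := ⟨n + 1, by ring⟩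
  rw [natMu_of_even μ heven, natMu_add_natMu_sub μ heven hj,
    show 2 * n + 1 + 1 = 2 * n + 2 by ring] at hpascal
  have hn : (n : ℝ) + 1 ≠ 0 := n.cast_add_one_ne_zero
  field_simp
  push_cast at hpascal
  linear_combination hpascal / 2

lemma add_mul_sum_mul_pow_mul_pow {R : Type*} [CommSemiring R] (c : ℤ → R) (m : ℕ) (x y : R)
    (hc₀ : c (-1) = 0) (hc₁ : c (m + 1) = 0) :
    (x + y) * ∑ k ∈ range (m + 1), c k * x ^ k * y ^ (m - k) =
      ∑ j ∈ range (m + 2), (c (j - 1) + c j) * x ^ j * y ^ (m + 1 - j) := by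
  rw [show m + 2 = m + 1 + 1 by rfl]
  simp only [add_mul, sum_add_distrib, mul_sum]
  congr 1
  · rw [sum_range_succ' _ (m + 1)]
    simp only [Nat.cast_add_one, add_sub_cancel_right, Nat.cast_zero, zero_sub, hc₀, zero_mul,
      add_zero, Nat.add_sub_add_right]
    exact sum_congr rfl fun k _ => by ring
  · rw [sum_range_succ _ (m + 1), Nat.cast_add_one, hc₁, zero_mul, zero_mul, add_zero]
    refine sum_congr rfl fun k hk => ?_
    rw [Nat.sub_add_comm (Nat.lt_succ_iff.mp (mem_range.mp hk)), pow_succ]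
    ring

lemma sum_range_ite_odd {M : Type*} [AddCommMonoid M] (f : ℕ → M) (m : ℕ) :
    ∑ j ∈ range (2 * m + 1), (if Odd j then f j else 0) = ∑ k ∈ range m, f (2 * k + 1) := by
  induction m with
  | zero => simp
  | succ m ih =>
    have hodd : Odd (2 * m + 1) := odd_two_mul_add_one m
    have heven : ¬ Odd (2 * m + 1 + 1) := by simp [Nat.odd_iff]; omega
    rw [show 2 * (m + 1) + 1 = 2 * m + 1 + 1 + 1 by ring, sum_range_succ, sum_range_succ, ih,
      sum_range_succ, if_pos hodd, if_neg heven, add_zero]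

theorem pMu_mul_odd (μ : ℝ) (hμ : -(1/2 : ℝ) < μ) (n : ℕ) (x y : ℂ) :
    (x + y) * pMu μ (2 * n + 1) x y =
      pMu μ (2 * n + 2) x y +
        ((2 * μ / (n + 1) : ℝ) : ℂ) *
          ∑ k ∈ Finset.range (n + 1),
            (binomMu μ (2 * n + 2) (2 * k + 1) : ℂ) * x ^ (2 * k + 1) * y ^ (2 * n + 1 - 2 * k) := by
  set r : ℂ := ((2 * μ / (n + 1) : ℝ) : ℂ) with hr
  have hexpand : (x + y) * pMu μ (2 * n + 1) x y = ∑ j ∈ range (2 * n + 3),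
      ((binomMu μ (2 * n + 1) (j - 1) + binomMu μ (2 * n + 1) j : ℝ) : ℂ) *
        x ^ j * y ^ (2 * n + 2 - j) := by
    rw [pMu]
    exact_mod_cast add_mul_sum_mul_pow_mul_pow (fun k : ℤ => (binomMu μ (2 * n + 1) k : ℂ))
      (2 * n + 1) x y (by simp [binomMu_of_neg]) (by simp [binomMu_of_lt])
  have hodd := sum_range_ite_odd
    (fun j => r * (binomMu μ (2 * n + 2) j : ℂ) * x ^ j * y ^ (2 * n + 2 - j)) (n + 1)
  rw [show 2 * (n + 1) + 1 = 2 * n + 3 by ring] at hodd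
  calc (x + y) * pMu μ (2 * n + 1) x y
      = ∑ j ∈ range (2 * n + 3), ((binomMu μ (2 * n + 2) j : ℂ) * x ^ j * y ^ (2 * n + 2 - j) +
          if Odd j then r * (binomMu μ (2 * n + 2) j : ℂ) * x ^ j * y ^ (2 * n + 2 - j)
          else 0) := by
        rw [hexpand]
        refine sum_congr rfl fun j hj => ?_
        rw [binomMu_pascal_even μ hμ n (Nat.lt_succ_iff.mp (mem_range.mp hj))]
        split_ifs <;> push_cast [hr] <;> ring
    _ = _ := by
        rw [sum_add_distrib, hodd, mul_sum, pMu]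
        refine congrArg _ (sum_congr rfl fun k _ => ?_)
        rw [show 2 * n + 2 - (2 * k + 1) = 2 * n + 1 - 2 * k by omega]
        push_cast
        ring
end

section
/- For every integer n ≥ 1, p_{4n-2,μ}(1,-1) = μ · 2^{2n-1} · (Π_{k=n+1}^{2n-1} (μ+k-1)) / (Π_{k=1}^{n} (μ+k-1/2)). -/
open Finset

/-! Writing `a = μ + 1/2`, one has `γ_μ(2k) = 4^k k! (a)_k` and `γ_μ(2k+1) = 2a 4^k k! (a+1)_k`,
so both the even- and the odd-index coefficients of `p_{2s,μ}(1,-1)` are, up to a common factor,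
of the form `C(t,i) (b)_t / ((b)_{t-i} (b)_i)`. As `(b)_t / (b)_{t-i}` and `(b)_t / (b)_i` are
falling factorials of `b + t - 1`, Chu–Vandermonde sums each parity class in closed form and gives
`p_{2s,μ}(1,-1) = 2μ (2μ+s+1)_{s-1} / (a)_s`. For `s = 2n-1` the duplication formula
`(2b)_{2m} = 4^m (b)_m (b+1/2)_m` turns this into the stated product. -/

open Polynomial

theorem descPochhammer_eval_add_eq_sum {R : Type*} [CommRing R] (x y : R) (k : ℕ) :
    (descPochhammer R k).eval (x + y) = ∑ i ∈ range (k + 1),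
      k.choose i * ((descPochhammer R i).eval x * (descPochhammer R (k - i)).eval y) := by
  have smeval_eq_eval (j : ℕ) (r : R) :
      (descPochhammer ℤ j).smeval r = (descPochhammer R j).eval r := by
    rw [descPochhammer_smeval_eq_ascPochhammer, ascPochhammer_smeval_eq_eval,
      descPochhammer_eval_eq_ascPochhammer]
  simp only [← smeval_eq_eval]
  rw [Ring.descPochhammer_smeval_add k (Commute.all x y),
    Nat.sum_antidiagonal_eq_sum_range_succ (fun i j => (k.choose i : R) *
      ((descPochhammer ℤ i).smeval x * (descPochhammer ℤ j).smeval y))]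

theorem ascPochhammer_eval_add {R : Type*} [CommSemiring R] (a : R) (m n : ℕ) :
    (ascPochhammer R (m + n)).eval a =
      (ascPochhammer R m).eval a * (ascPochhammer R n).eval (a + m) := by
  rw [← ascPochhammer_mul, eval_mul, eval_comp, eval_add, eval_X, eval_natCast]

theorem ascPochhammer_eval_succ_left {R : Type*} [CommSemiring R] (a : R) (n : ℕ) :
    (ascPochhammer R (n + 1)).eval a = a * (ascPochhammer R n).eval (a + 1) := by
  rw [add_comm n, ascPochhammer_eval_add, ascPochhammer_one, eval_X, Nat.cast_one]

theorem ascPochhammer_eval_eq_mul_descPochhammer {R : Type*} [CommRing R] (a : R) {i t : ℕ}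
    (hi : i ≤ t) :
    (ascPochhammer R t).eval a =
      (ascPochhammer R (t - i)).eval a * (descPochhammer R i).eval (a + t - 1) := by
  obtain ⟨j, rfl⟩ := Nat.exists_eq_add_of_le' hi
  rw [Nat.add_sub_cancel, ascPochhammer_eval_add, descPochhammer_eval_eq_ascPochhammer]
  push_cast
  ring_nf

theorem ascPochhammer_eval_two_mul (b : ℝ) (m : ℕ) :
    (ascPochhammer ℝ (2 * m)).eval (2 * b) =
      4 ^ m * ((ascPochhammer ℝ m).eval b * (ascPochhammer ℝ m).eval (b + 1 / 2)) := by
  induction m with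
  | zero => simp
  | succ m ih =>
    rw [show 2 * (m + 1) = 2 * m + 1 + 1 by ring, ascPochhammer_succ_eval, ascPochhammer_succ_eval,
      ih, ascPochhammer_succ_eval, ascPochhammer_succ_eval]
    push_cast
    ring

theorem ascPochhammer_eval_two_mul_div {a : ℝ} (ha : 0 < a) (m : ℕ) :
    (ascPochhammer ℝ (2 * m)).eval (2 * a + 2 * m + 1) / (ascPochhammer ℝ (2 * m + 1)).eval a =
      4 ^ m * (ascPochhammer ℝ m).eval (a + m + 1 / 2) / (ascPochhammer ℝ (m + 1)).eval a := by
  have hm : (0 : ℝ) ≤ m := m.cast_nonneg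
  have hA := ascPochhammer_pos m (a + m + 1) (by linarith)
  have hB := ascPochhammer_pos (m + 1) a ha
  rw [show 2 * a + 2 * m + 1 = 2 * (a + m + 1 / 2) by ring, ascPochhammer_eval_two_mul,
    show 2 * m + 1 = (m + 1) + m by ring, ascPochhammer_eval_add,
    Nat.cast_add_one, show a + (m + 1) = a + m + 1 by ring,
    div_eq_div_iff (mul_pos hB hA).ne' hB.ne']
  ring_nf

theorem prod_Ico_add_eq_ascPochhammer_eval {R : Type*} [CommSemiring R] (x : R) (j m : ℕ) :
    ∏ k ∈ Ico j (j + m), (x + k) = (ascPochhammer R m).eval (x + j) := by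
  induction m with
  | zero => simp
  | succ m ih =>
    rw [← add_assoc, prod_Ico_succ_top (by omega), ih, ascPochhammer_succ_eval]
    push_cast
    ring

theorem sum_choose_mul_ascPochhammer_div {b : ℝ} (hb : 0 < b) (t : ℕ) :
    ∑ i ∈ range (t + 1), t.choose i * (ascPochhammer ℝ t).eval b /
        ((ascPochhammer ℝ (t - i)).eval b * (ascPochhammer ℝ i).eval b) =
      (ascPochhammer ℝ t).eval (2 * b + t - 1) / (ascPochhammer ℝ t).eval b := by
  set P : ℕ → ℝ := fun k => (ascPochhammer ℝ k).eval b
  have hP (k : ℕ) : 0 < P k := ascPochhammer_pos k b hb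
  have hterm : ∀ i ∈ range (t + 1), t.choose i * P t / (P (t - i) * P i) =
      t.choose i * ((descPochhammer ℝ i).eval (b + t - 1) *
        (descPochhammer ℝ (t - i)).eval (b + t - 1)) / P t := by
    intro i hi
    have hit : i ≤ t := Nat.lt_succ_iff.mp (mem_range.mp hi)
    have h₁ := ascPochhammer_eval_eq_mul_descPochhammer b hit
    have h₂ := ascPochhammer_eval_eq_mul_descPochhammer b (Nat.sub_le t i)
    rw [Nat.sub_sub_self hit] at h₂
    rw [div_eq_div_iff (mul_pos (hP _) (hP _)).ne' (hP t).ne']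
    linear_combination
      (t.choose i : ℝ) * (P t * h₁ + P (t - i) * (descPochhammer ℝ i).eval (b + t - 1) * h₂)
  rw [sum_congr rfl hterm, ← sum_div, ← descPochhammer_eval_add_eq_sum,
    descPochhammer_eval_eq_ascPochhammer]
  congr 2
  ring

theorem sum_range_two_mul_add_one {M : Type*} [AddCommMonoid M] (f : ℕ → M) (s : ℕ) :
    ∑ k ∈ range (2 * s + 1), f k =
      ∑ i ∈ range (s + 1), f (2 * i) + ∑ i ∈ range s, f (2 * i + 1) := by
  induction s with
  | zero => simp
  | succ s ih =>
    rw [show 2 * (s + 1) + 1 = 2 * s + 1 + 1 + 1 by ring, sum_range_succ, sum_range_succ, ih,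
      sum_range_succ (fun i => f (2 * i)) (s + 1), sum_range_succ (fun i => f (2 * i + 1)) s,
      show 2 * s + 1 + 1 = 2 * (s + 1) by ring]
    abel

theorem gammaMu_two_mul_add_one_eq_mul (μ : ℝ) (k : ℕ) :
    gammaMu μ (2 * k + 1) = 2 * (μ + 1 / 2 + k) * gammaMu μ (2 * k) := by
  rw [gammaMu, if_pos (odd_two_mul_add_one k)]
  push_cast
  ring

theorem gammaMu_two_mul (μ : ℝ) (k : ℕ) :
    gammaMu μ (2 * k) = 4 ^ k * k.factorial * (ascPochhammer ℝ k).eval (μ + 1 / 2) := by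
  induction k with
  | zero => simp [gammaMu]
  | succ k ih =>
    have h_even : ¬ Odd (2 * k + 1 + 1) := by rw [Nat.not_odd_iff_even]; exact ⟨k + 1, by ring⟩
    rw [mul_add_one, gammaMu, if_neg h_even, gammaMu_two_mul_add_one_eq_mul, ih,
      ascPochhammer_succ_eval, Nat.factorial_succ]
    push_cast
    ring

theorem gammaMu_two_mul_add_one (μ : ℝ) (k : ℕ) :
    gammaMu μ (2 * k + 1) =
      2 * (μ + 1 / 2) * 4 ^ k * k.factorial * (ascPochhammer ℝ k).eval (μ + 3 / 2) := by
  have h : (ascPochhammer ℝ k).eval (μ + 1 / 2) * (μ + 1 / 2 + k) =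
      (μ + 1 / 2) * (ascPochhammer ℝ k).eval (μ + 3 / 2) := by
    rw [← ascPochhammer_succ_eval, ascPochhammer_eval_succ_left]
    ring_nf
  rw [gammaMu_two_mul_add_one_eq_mul, gammaMu_two_mul]
  linear_combination 2 * 4 ^ k * (k.factorial : ℝ) * h

theorem binomMu_natCast (μ : ℝ) {m k : ℕ} (hk : k ≤ m) :
    binomMu μ m k = gammaMu μ m / (gammaMu μ (m - k) * gammaMu μ k) := by
  rw [binomMu, if_pos ⟨Int.natCast_nonneg k, by exact_mod_cast hk⟩, Int.toNat_natCast]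

theorem binomMu_two_mul_two_mul {μ : ℝ} (hμ : -(1 / 2 : ℝ) < μ) {s i : ℕ} (hi : i ≤ s) :
    binomMu μ (2 * s) ↑(2 * i) = s.choose i * (ascPochhammer ℝ s).eval (μ + 1 / 2) /
      ((ascPochhammer ℝ (s - i)).eval (μ + 1 / 2) * (ascPochhammer ℝ i).eval (μ + 1 / 2)) := by
  have hP (k : ℕ) : 0 < (ascPochhammer ℝ k).eval (μ + 1 / 2) := ascPochhammer_pos k _ (by linarith)
  have h4 : (4 : ℝ) ^ s = 4 ^ (s - i) * 4 ^ i := by rw [← pow_add, Nat.sub_add_cancel hi]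
  rw [binomMu_natCast μ (by omega), ← Nat.mul_sub, gammaMu_two_mul, gammaMu_two_mul,
    gammaMu_two_mul, Nat.cast_choose ℝ hi, h4]
  have hs := hP s
  have hi' := hP i
  have hsi := hP (s - i)
  field_simp

theorem binomMu_two_mul_succ_two_mul_add_one {μ : ℝ} (hμ : -(1 / 2 : ℝ) < μ) {t i : ℕ}
    (hi : i ≤ t) :
    binomMu μ (2 * (t + 1)) ↑(2 * i + 1) = (t + 1) / (μ + 1 / 2) *
      (t.choose i * (ascPochhammer ℝ t).eval (μ + 3 / 2) /
        ((ascPochhammer ℝ (t - i)).eval (μ + 3 / 2) * (ascPochhammer ℝ i).eval (μ + 3 / 2))) := by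
  have hQ (k : ℕ) : 0 < (ascPochhammer ℝ k).eval (μ + 3 / 2) := ascPochhammer_pos k _ (by linarith)
  have ha : 0 < μ + 1 / 2 := by linarith
  have h4 : (4 : ℝ) ^ (t + 1) = 4 ^ (t - i) * 4 ^ i * 4 := by
    rw [← pow_add, ← pow_succ, Nat.sub_add_cancel hi]
  rw [binomMu_natCast μ (by omega), show 2 * (t + 1) - (2 * i + 1) = 2 * (t - i) + 1 by omega,
    gammaMu_two_mul, gammaMu_two_mul_add_one,
    gammaMu_two_mul_add_one, ascPochhammer_eval_succ_left, show μ + 1 / 2 + 1 = μ + 3 / 2 by ring,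
    Nat.cast_choose ℝ hi, h4, Nat.factorial_succ]
  have ht := hQ t
  have hi' := hQ i
  have hti := hQ (t - i)
  field_simp
  push_cast
  ring

theorem pMu_two_mul_one_neg_one (μ : ℝ) (s : ℕ) :
    pMu μ (2 * s) 1 (-1) = ↑(∑ i ∈ range (s + 1), binomMu μ (2 * s) ↑(2 * i) -
      ∑ i ∈ range s, binomMu μ (2 * s) ↑(2 * i + 1)) := by
  rw [pMu, sum_range_two_mul_add_one, sub_eq_add_neg, ← sum_neg_distrib]
  push_cast
  congr 1 <;> refine sum_congr rfl fun i hi => ?_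
  · rw [← Nat.mul_sub, (even_two_mul _).neg_one_pow]
    simp
  · rw [show 2 * s - (2 * i + 1) = 2 * (s - i - 1) + 1 by have := mem_range.mp hi; omega,
      (odd_two_mul_add_one _).neg_one_pow]
    simp

theorem pMu_two_mul_succ_one_neg_one {μ : ℝ} (hμ : -(1 / 2 : ℝ) < μ) (t : ℕ) :
    pMu μ (2 * (t + 1)) 1 (-1) = ↑(2 * μ * (ascPochhammer ℝ t).eval (2 * μ + t + 2) /
      (ascPochhammer ℝ (t + 1)).eval (μ + 1 / 2)) := by
  have ha : 0 < μ + 1 / 2 := by linarith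
  have hQ : 0 < (ascPochhammer ℝ t).eval (μ + 3 / 2) := ascPochhammer_pos t _ (by linarith)
  have h_even : ∑ i ∈ range (t + 1 + 1), binomMu μ (2 * (t + 1)) ↑(2 * i) =
      (ascPochhammer ℝ (t + 1)).eval (2 * (μ + 1 / 2) + ↑(t + 1) - 1) /
        (ascPochhammer ℝ (t + 1)).eval (μ + 1 / 2) := by
    rw [← sum_choose_mul_ascPochhammer_div ha]
    exact sum_congr rfl fun i hi => binomMu_two_mul_two_mul hμ (mem_range_succ_iff.mp hi)
  have h_odd : ∑ i ∈ range (t + 1), binomMu μ (2 * (t + 1)) ↑(2 * i + 1) =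
      (t + 1) / (μ + 1 / 2) * ((ascPochhammer ℝ t).eval (2 * (μ + 3 / 2) + t - 1) /
        (ascPochhammer ℝ t).eval (μ + 3 / 2)) := by
    rw [← sum_choose_mul_ascPochhammer_div (by linarith), mul_sum]
    exact sum_congr rfl fun i hi =>
      binomMu_two_mul_succ_two_mul_add_one hμ (mem_range_succ_iff.mp hi)
  rw [pMu_two_mul_one_neg_one, h_even, h_odd, ascPochhammer_eval_succ_left,
    ascPochhammer_eval_succ_left, show 2 * (μ + 1 / 2) + ↑(t + 1) - 1 + 1 = 2 * μ + t + 2 by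
      push_cast; ring, show 2 * (μ + 3 / 2) + t - 1 = 2 * μ + t + 2 by ring,
    show μ + 1 / 2 + 1 = μ + 3 / 2 by ring]
  congr 1
  field_simp
  push_cast
  ring

theorem pMu_four_n_sub_two (μ : ℝ) (hμ : -(1/2 : ℝ) < μ) (n : ℕ) (hn : 1 ≤ n) :
    pMu μ (4 * n - 2) 1 (-1) =
      ((μ * 2 ^ (2 * n - 1) * (∏ k ∈ Finset.Icc (n + 1) (2 * n - 1), (μ + (k : ℝ) - 1)) /
        (∏ k ∈ Finset.Icc 1 n, (μ + (k : ℝ) - 1/2)) : ℝ) : ℂ) := by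
  obtain ⟨m, rfl⟩ : ∃ m, n = m + 1 := ⟨n - 1, by omega⟩
  have h_num : ∏ k ∈ Icc (m + 1 + 1) (2 * (m + 1) - 1), (μ + (k : ℝ) - 1) =
      (ascPochhammer ℝ m).eval (μ + 1 / 2 + m + 1 / 2) := by
    rw [← Ico_add_one_right_eq_Icc, show 2 * (m + 1) - 1 + 1 = m + 2 + m by omega]
    simp_rw [add_sub_right_comm μ]
    rw [prod_Ico_add_eq_ascPochhammer_eval]
    push_cast
    ring_nf
  have h_den : ∏ k ∈ Icc 1 (m + 1), (μ + (k : ℝ) - 1 / 2) =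
      (ascPochhammer ℝ (m + 1)).eval (μ + 1 / 2) := by
    rw [← Ico_add_one_right_eq_Icc, add_comm (m + 1)]
    simp_rw [add_sub_right_comm μ]
    rw [prod_Ico_add_eq_ascPochhammer_eval]
    push_cast
    ring_nf
  have h_pow : (2 : ℝ) ^ (2 * (m + 1) - 1) = 2 * 4 ^ m := by
    rw [show 2 * (m + 1) - 1 = 2 * m + 1 by omega, pow_succ, pow_mul]
    norm_num
    ring
  rw [show 4 * (m + 1) - 2 = 2 * (2 * m + 1) by omega, pMu_two_mul_succ_one_neg_one hμ, h_num,
    h_den, h_pow, show 2 * μ + ↑(2 * m) + 2 = 2 * (μ + 1 / 2) + 2 * m + 1 by push_cast; ring,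
    mul_div_assoc, ascPochhammer_eval_two_mul_div (by linarith)]
  congr 1
  ring
end
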